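/- On a periodic chain of even length N, the staggered XY operator Q = Σᵢ (-1)ⁱ (XᵢXᵢ₊₁ + YᵢYᵢ₊₁) does not in general commute with the XY Hamiltonian H = Σᵢ (J_X XᵢXᵢ₊₁ + J_Y YᵢYᵢ₊₁) unless J_X = -J_Y; that is, [Q,H] = 0 holds if J_X + J_Y = 0 (for N even, N ≥ 4). -/

import Mathlib

open Complex
open scoped Classical

noncomputable def σx : Matrix (Fin 2) (Fin 2) ℂ := !![0, 1; 1, 0]
noncomputable def σy : Matrix (Fin 2) (Fin 2) ℂ := !![0, -I; I, 0]
noncomputable def σz : Matrix (Fin 2) (Fin 2) ℂ := !![1, 0; 0, -1]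

/-- The single-site operator `M` acting on site `i` of a spin-1/2 chain of `N` sites
(tensored with the identity on all other sites). -/
noncomputable def pauliAt (N : ℕ) (i : Fin N) (M : Matrix (Fin 2) (Fin 2) ℂ) :
    Matrix (Fin N → Fin 2) (Fin N → Fin 2) ℂ :=
  fun f g => M (f i) (g i) * if ∀ j, j ≠ i → f j = g j then 1 else 0

/-!
Write `Q = ∑ᵢ (-1)ⁱ Aᵢ` with `Aᵢ = XᵢXᵢ₊₁ + YᵢYᵢ₊₁`; when `J_X = -J_Y` the Hamiltonian is
`H = J_Y ∑ⱼ Bⱼ` with `Bⱼ = YⱼYⱼ₊₁ - XⱼXⱼ₊₁`. Operators on disjoint bonds commute, and on a single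
bond `XX` commutes with `YY` (each site contributes a sign), so `⁅Aᵢ, Bⱼ⁆` vanishes unless the bonds
`i` and `j` are neighbours. For neighbours `⁅Aᵢ, Bᵢ₊₁⁆ = ⁅Aᵢ₊₁, Bᵢ⁆`, and these two brackets enter
`⁅Q, H⁆` with the opposite signs `(-1)ⁱ` and `(-1)ⁱ⁺¹`; on a ring of even length the staggering is
consistent across the bond `N - 1 → 0`, and for `N ≥ 3` the two neighbours of a bond are distinct,
so all contributions cancel in pairs.
-/

attribute [local instance] LieRing.ofAssociativeRing

theorem Fintype.sum_sum_eq_zero_of_perm {α M : Type*} [Fintype α] [AddCommMonoid M]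
    (σ : Equiv.Perm α) (hσ : ∀ i, σ (σ i) ≠ i) (c : α → α → M)
    (hc : ∀ i j, j ≠ σ i → i ≠ σ j → c i j = 0) (hpair : ∀ i, c i (σ i) + c (σ i) i = 0) :
    ∑ i, ∑ j, c i j = 0 := by
  have row : ∀ i, ∑ j, c i j = c i (σ i) + c i (σ.symm i) := fun i =>
    Fintype.sum_eq_add _ _ (fun h => hσ i (by rw [h, Equiv.apply_symm_apply]))
      fun j ⟨hj, hj'⟩ => hc i j hj fun h => hj' (by rw [h, Equiv.symm_apply_apply])
  calc ∑ i, ∑ j, c i j = ∑ i, c i (σ i) + ∑ i, c i (σ.symm i) := by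
        simp only [row, Finset.sum_add_distrib]
    _ = ∑ i, (c i (σ i) + c (σ i) i) := by
        rw [← Equiv.sum_comp σ fun i => c i (σ.symm i), ← Finset.sum_add_distrib]
        simp only [Equiv.symm_apply_apply]
    _ = 0 := Fintype.sum_eq_zero _ hpair

namespace Fin

theorem add_one_ne_self {N : ℕ} [NeZero N] (hN : 2 ≤ N) (i : Fin N) : i + 1 ≠ i :=
  add_ne_left.mpr fun h => by have := Fin.one_eq_zero_iff.mp h; omega

theorem add_one_add_one_ne_self {N : ℕ} [NeZero N] (hN : 3 ≤ N) (i : Fin N) : i + 1 + 1 ≠ i := by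
  rw [add_assoc]
  refine add_ne_left.mpr fun h => ?_
  have := congrArg Fin.val h
  simp only [Fin.val_add, Fin.val_one', Fin.val_zero] at this
  rw [Nat.mod_eq_of_lt (by omega : 1 < N), Nat.mod_eq_of_lt (by omega : 2 < N)] at this
  omega

theorem neg_one_pow_val_add_one {R : Type*} [Ring R] {N : ℕ} [NeZero N] (hN : Even N)
    (i : Fin N) : (-1 : R) ^ ((i + 1 : Fin N) : ℕ) = -(-1) ^ (i : ℕ) := by
  rw [neg_one_pow_eq_pow_mod_two, Fin.val_add, Fin.val_one',
    Nat.mod_mod_of_dvd _ (even_iff_two_dvd.mp hN), Nat.add_mod,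
    Nat.mod_mod_of_dvd _ (even_iff_two_dvd.mp hN), ← Nat.add_mod, ← neg_one_pow_eq_pow_mod_two,
    pow_succ, mul_neg_one]

end Fin

theorem commute_mul_mul_of_anticommute {R : Type*} [Ring R] {x₁ x₂ y₁ y₂ : R}
    (h₁ : x₁ * y₁ = -(y₁ * x₁)) (h₂ : x₂ * y₂ = -(y₂ * x₂))
    (h₂₁ : Commute x₂ y₁) (h₁₂ : Commute x₁ y₂) : Commute (x₁ * x₂) (y₁ * y₂) :=
  calc x₁ * x₂ * (y₁ * y₂) = x₁ * y₁ * (x₂ * y₂) := by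
        rw [mul_assoc, ← mul_assoc x₂, h₂₁.eq, mul_assoc, mul_assoc]
    _ = y₁ * x₁ * (y₂ * x₂) := by rw [h₁, h₂, neg_mul_neg]
    _ = y₁ * y₂ * (x₁ * x₂) := by
        rw [mul_assoc, ← mul_assoc x₁, h₁₂.eq, mul_assoc, mul_assoc]

theorem σx_mul_σy : σx * σy = -(σy * σx) := by
  ext i j
  fin_cases i <;> fin_cases j <;> simp [σx, σy, Matrix.mul_apply]

section SpinChain

variable {N : ℕ}

theorem pauliAt_mul_apply (i : Fin N) (M : Matrix (Fin 2) (Fin 2) ℂ)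
    (A : Matrix (Fin N → Fin 2) (Fin N → Fin 2) ℂ) (f g : Fin N → Fin 2) :
    (pauliAt N i M * A) f g = ∑ k, M (f i) k * A (Function.update f i k) g := by
  have update_self_of_agree (h : Fin N → Fin 2) (hfh : ∀ j, j ≠ i → f j = h j) :
      Function.update f i (h i) = h :=
    (Function.eq_update_iff.mpr ⟨rfl, fun j hj => (hfh j hj).symm⟩).symm
  simp only [Matrix.mul_apply, pauliAt, mul_ite, ite_mul, mul_one, mul_zero, zero_mul]
  rw [← Finset.sum_filter]
  refine Finset.sum_nbij' (· i) (Function.update f i) ?_ ?_ ?_ ?_ ?_ <;>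
    simp +contextual [update_self_of_agree]

theorem pauliAt_mul_pauliAt_self (i : Fin N) (M M' : Matrix (Fin 2) (Fin 2) ℂ) :
    pauliAt N i M * pauliAt N i M' = pauliAt N i (M * M') := by
  ext f g
  have agree (k : Fin 2) :
      (∀ j, j ≠ i → Function.update f i k j = g j) ↔ ∀ j, j ≠ i → f j = g j :=
    forall₂_congr fun j hj => by rw [Function.update_of_ne hj]
  rw [pauliAt_mul_apply]
  simp only [pauliAt, Function.update_self, agree, Matrix.mul_apply, Finset.sum_mul, mul_assoc]

theorem pauliAt_mul_pauliAt_apply_of_ne {i j : Fin N} (hij : i ≠ j)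
    (M M' : Matrix (Fin 2) (Fin 2) ℂ) (f g : Fin N → Fin 2) :
    (pauliAt N i M * pauliAt N j M') f g
      = M (f i) (g i) * M' (f j) (g j) * if ∀ k, k ≠ i → k ≠ j → f k = g k then 1 else 0 := by
  have agree : (∀ k, k ≠ j → Function.update f i (g i) k = g k)
      ↔ ∀ k, k ≠ i → k ≠ j → f k = g k := by
    refine forall_congr' fun k => ?_
    by_cases hk : k = i
    · subst hk; simp [hij]
    · simp [hk]
  rw [pauliAt_mul_apply, Fintype.sum_eq_single (g i)]
  · simp only [pauliAt, Function.update_of_ne hij.symm, agree, mul_assoc]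
  · intro k hk
    rw [pauliAt, if_neg fun h => hk (by simpa using h i hij), mul_zero, mul_zero]

theorem pauliAt_commute {i j : Fin N} (hij : i ≠ j) (M M' : Matrix (Fin 2) (Fin 2) ℂ) :
    Commute (pauliAt N i M) (pauliAt N j M') := by
  ext f g
  rw [pauliAt_mul_pauliAt_apply_of_ne hij, pauliAt_mul_pauliAt_apply_of_ne hij.symm]
  have swap : (∀ k, k ≠ j → k ≠ i → f k = g k) ↔ ∀ k, k ≠ i → k ≠ j → f k = g k :=
    forall_congr' fun _ => imp.swap
  simp only [swap]
  ring

theorem pauliAt_neg (i : Fin N) (M : Matrix (Fin 2) (Fin 2) ℂ) :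
    pauliAt N i (-M) = -pauliAt N i M := by
  ext f g
  simp only [pauliAt, Matrix.neg_apply, neg_mul]

theorem pauliAt_σx_mul_pauliAt_σy (i : Fin N) :
    pauliAt N i σx * pauliAt N i σy = -(pauliAt N i σy * pauliAt N i σx) := by
  rw [pauliAt_mul_pauliAt_self, pauliAt_mul_pauliAt_self, σx_mul_σy, pauliAt_neg]

noncomputable def xxPlusYY (N : ℕ) (a b : Fin N) : Matrix (Fin N → Fin 2) (Fin N → Fin 2) ℂ :=
  pauliAt N a σx * pauliAt N b σx + pauliAt N a σy * pauliAt N b σy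

noncomputable def yyMinusXX (N : ℕ) (a b : Fin N) : Matrix (Fin N → Fin 2) (Fin N → Fin 2) ℂ :=
  pauliAt N a σy * pauliAt N b σy - pauliAt N a σx * pauliAt N b σx

theorem commute_pauliAt_mul_pauliAt_of_disjoint {a b c d : Fin N} (hac : a ≠ c) (had : a ≠ d)
    (hbc : b ≠ c) (hbd : b ≠ d) (M₁ M₂ M₃ M₄ : Matrix (Fin 2) (Fin 2) ℂ) :
    Commute (pauliAt N a M₁ * pauliAt N b M₂) (pauliAt N c M₃ * pauliAt N d M₄) :=
  ((pauliAt_commute hac M₁ M₃).mul_right (pauliAt_commute had M₁ M₄)).mul_left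
    ((pauliAt_commute hbc M₂ M₃).mul_right (pauliAt_commute hbd M₂ M₄))

theorem lie_pauliAt_mul_pauliAt_of_overlap {a b c : Fin N} (hab : a ≠ b) (hbc : b ≠ c)
    (hac : a ≠ c) (M₁ M₂ M₃ M₄ : Matrix (Fin 2) (Fin 2) ℂ) :
    ⁅pauliAt N a M₁ * pauliAt N b M₂, pauliAt N b M₃ * pauliAt N c M₄⁆
      = pauliAt N a M₁ * ⁅pauliAt N b M₂, pauliAt N b M₃⁆ * pauliAt N c M₄ := by
  have reorder : pauliAt N b M₃ * pauliAt N c M₄ * (pauliAt N a M₁ * pauliAt N b M₂)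
      = pauliAt N a M₁ * (pauliAt N b M₃ * pauliAt N b M₂) * pauliAt N c M₄ := by
    rw [mul_assoc, ((pauliAt_commute hac.symm M₄ M₁).mul_right
      (pauliAt_commute hbc.symm M₄ M₂)).eq, ← mul_assoc, ← mul_assoc,
      (pauliAt_commute hab.symm M₃ M₁).eq, mul_assoc (pauliAt N a M₁)]
  rw [Ring.lie_def, Ring.lie_def, reorder]
  noncomm_ring

theorem lie_xxPlusYY_yyMinusXX_self {a b : Fin N} (hab : a ≠ b) :
    ⁅xxPlusYY N a b, yyMinusXX N a b⁆ = 0 := by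
  have h := commute_mul_mul_of_anticommute (pauliAt_σx_mul_pauliAt_σy a)
    (pauliAt_σx_mul_pauliAt_σy b) (pauliAt_commute hab.symm σx σy)
    (pauliAt_commute hab σx σy)
  rw [← commute_iff_lie_eq]
  exact (h.add_left (Commute.refl _)).sub_right ((Commute.refl _).add_left h.symm)

theorem lie_xxPlusYY_yyMinusXX_of_disjoint {a b c d : Fin N} (hac : a ≠ c) (had : a ≠ d)
    (hbc : b ≠ c) (hbd : b ≠ d) : ⁅xxPlusYY N a b, yyMinusXX N c d⁆ = 0 := by
  have h := commute_pauliAt_mul_pauliAt_of_disjoint hac had hbc hbd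
  rw [← commute_iff_lie_eq]
  exact ((h _ _ _ _).add_left (h _ _ _ _)).sub_right ((h _ _ _ _).add_left (h _ _ _ _))

/-- Both sides equal `Xₐ ⁅X_b, Y_b⁆ Y_c + Yₐ ⁅X_b, Y_b⁆ X_c`. -/
theorem lie_xxPlusYY_yyMinusXX_of_adjacent {a b c : Fin N} (hab : a ≠ b) (hbc : b ≠ c)
    (hac : a ≠ c) : ⁅xxPlusYY N a b, yyMinusXX N b c⁆ = ⁅xxPlusYY N b c, yyMinusXX N a b⁆ := by
  rw [← lie_skew (xxPlusYY N b c)]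
  simp only [xxPlusYY, yyMinusXX, lie_add, add_lie, lie_sub, sub_lie,
    lie_pauliAt_mul_pauliAt_of_overlap hab hbc hac, lie_self, mul_zero, zero_mul]
  abel

theorem lie_sum_neg_one_pow_smul_xxPlusYY_sum_yyMinusXX [NeZero N] (hNeven : Even N)
    (hN : 3 ≤ N) :
    ⁅∑ i : Fin N, (-1 : ℂ) ^ (i : ℕ) • xxPlusYY N i (i + 1), ∑ j : Fin N, yyMinusXX N j (j + 1)⁆
      = 0 := by
  have hsucc (i : Fin N) : i ≠ i + 1 := (Fin.add_one_ne_self (by omega) i).symm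
  rw [sum_lie]
  simp only [lie_sum, smul_lie]
  refine Fintype.sum_sum_eq_zero_of_perm (Equiv.addRight 1) (Fin.add_one_add_one_ne_self hN) _
    (fun i j hj hi => ?_) fun i => ?_
  · rw [Equiv.coe_addRight] at hi hj
    rcases eq_or_ne i j with rfl | hij
    · rw [lie_xxPlusYY_yyMinusXX_self (hsucc i), smul_zero]
    · rw [lie_xxPlusYY_yyMinusXX_of_disjoint hij hi (Ne.symm hj)
        fun h => hij (add_right_cancel h), smul_zero]
  · rw [Equiv.coe_addRight, Fin.neg_one_pow_val_add_one hNeven,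
      lie_xxPlusYY_yyMinusXX_of_adjacent (hsucc i) (hsucc (i + 1))
        (Fin.add_one_add_one_ne_self hN i).symm, neg_smul, add_neg_cancel]

end SpinChain

theorem staggered_XY_commutes_when_JX_eq_neg_JY
    (N : ℕ) [NeZero N] (hNeven : Even N) (hN : 4 ≤ N) (JX JY : ℝ)
    (hJ : JX = -JY)
    (H : Matrix (Fin N → Fin 2) (Fin N → Fin 2) ℂ)
    (hH : H = ∑ i : Fin N,
      ((JX : ℂ) • (pauliAt N i σx * pauliAt N (i + 1) σx)
        + (JY : ℂ) • (pauliAt N i σy * pauliAt N (i + 1) σy)))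
    (Q : Matrix (Fin N → Fin 2) (Fin N → Fin 2) ℂ)
    (hQ : Q = ∑ i : Fin N, ((-1 : ℂ) ^ (i : ℕ)) •
      (pauliAt N i σx * pauliAt N (i + 1) σx
        + pauliAt N i σy * pauliAt N (i + 1) σy)) :
    Q * H - H * Q = 0 := by
  have H_eq : H = (JY : ℂ) • ∑ j : Fin N, yyMinusXX N j (j + 1) := by
    rw [hH, hJ, Finset.smul_sum]
    refine Finset.sum_congr rfl fun j _ => ?_
    rw [yyMinusXX]
    push_cast
    module
  have Q_eq : Q = ∑ i : Fin N, (-1 : ℂ) ^ (i : ℕ) • xxPlusYY N i (i + 1) := hQ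
  rw [← Ring.lie_def, Q_eq, H_eq, lie_smul,
    lie_sum_neg_one_pow_smul_xxPlusYY_sum_yyMinusXX hNeven (by omega), smul_zero]
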